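/- Let y ∈ I_n be an involution and 1 < i < n, with A = {i-1, i, i+1}. Define z by the case rule: z = y if y(A) ≠ A and y(i) lies between y(i-1) and y(i+1); z = (i-1,i)·y·(i-1,i) if y(A) ≠ A and y(i+1) lies between y(i-1) and y(i); z = (i,i+1)·y·(i,i+1) if y(A) ≠ A and y(i-1) lies between y(i) and y(i+1); z = (i-1,i+1)·y·(i-1,i+1) if y(A) = A. Then z is again an involution in S_n, and the map y ↦ z is an involution on I_n. -/

import Mathlib

open scoped Classical

/-- `BtwVal a b c` : the value `b` lies strictly between `a` and `c`. -/
def BtwVal (a b c : ℕ) : Prop := (a < b ∧ b < c) ∨ (c < b ∧ b < a)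

/-- The dual-equivalence case rule on involutions: `z = (i-1,i+1)·y·(i-1,i+1)` if
`y(A) = A` where `A = {i-1,i,i+1}`; otherwise `z = y` if `y(i)` lies between
`y(i-1)` and `y(i+1)`, `z = (i-1,i)·y·(i-1,i)` if `y(i+1)` lies between `y(i-1)`
and `y(i)`, and `z = (i,i+1)·y·(i,i+1)` if `y(i-1)` lies between `y(i)` and
`y(i+1)`. -/
noncomputable def dualMove (i : ℕ) (y : Equiv.Perm ℕ) : Equiv.Perm ℕ :=
  if (⇑y) '' ({i - 1, i, i + 1} : Set ℕ) = ({i - 1, i, i + 1} : Set ℕ) then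
    Equiv.swap (i - 1) (i + 1) * y * Equiv.swap (i - 1) (i + 1)
  else if BtwVal (y (i - 1)) (y i) (y (i + 1)) then y
  else if BtwVal (y (i - 1)) (y (i + 1)) (y i) then
    Equiv.swap (i - 1) i * y * Equiv.swap (i - 1) i
  else Equiv.swap i (i + 1) * y * Equiv.swap i (i + 1)

/-! In every case `z = s * y * s` for an involution `s` that fixes `A` setwise (`s = 1` in the
middle case), so `z` is an involution, and it suffices to check that `z` falls into the same case
as `y`, with the same `s`. Conjugating by `s` preserves `y(A) = A`. In the two adjacent-swap cases
`s = (k, k+1)` permutes the positions of the triple, which keeps the same entry strictly between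
the other two, and relabels the values `k ↔ k+1`; this relabelling preserves betweenness
unless both `k` and `k+1` are values of `y` on `A`. For an involution that would force `y` to map
two points of `A` into `A`, hence the third out of `A` (as `y(A) ≠ A`), and that contradicts the
case hypothesis. -/

open Equiv Set Function

theorem btwVal_swap_iff {k a b c : ℕ} {S : Set ℕ} (ha : a ∈ S) (hb : b ∈ S) (hc : c ∈ S)
    (hk : k ∉ S ∨ k + 1 ∉ S) :
    BtwVal (swap k (k + 1) a) (swap k (k + 1) b) (swap k (k + 1) c) ↔ BtwVal a b c := by
  have hk' : (k ≠ a ∧ k ≠ b ∧ k ≠ c) ∨ (k + 1 ≠ a ∧ k + 1 ≠ b ∧ k + 1 ≠ c) := by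
    rcases hk with hk | hk <;> [left; right] <;>
      refine ⟨?_, ?_, ?_⟩ <;> rintro rfl <;> contradiction
  simp only [BtwVal, swap_apply_def]
  split_ifs <;> omega

section Conjugation

variable {M : Type*} [Monoid M] {s y : M}

theorem conj_mul_self_eq_one (hs : s * s = 1) (hy : y * y = 1) : s * y * s * (s * y * s) = 1 := by
  calc s * y * s * (s * y * s) = s * (y * (s * s) * y) * s := by simp only [mul_assoc]
    _ = 1 := by rw [hs, mul_one, hy, mul_one, hs]

theorem conj_conj_eq_self (hs : s * s = 1) : s * (s * y * s) * s = y := by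
  calc s * (s * y * s) * s = (s * s) * y * (s * s) := by simp only [mul_assoc]
    _ = y := by rw [hs, one_mul, mul_one]

end Conjugation

theorem Function.Involutive.image_eq_self_iff_mapsTo {α : Type*} {f : α → α} (hf : Involutive f)
    {A : Set α} : f '' A = A ↔ MapsTo f A A :=
  ⟨fun h _ hx => h.subset (mem_image_of_mem f hx),
    fun h => h.image_subset.antisymm fun x hx => ⟨f x, h hx, hf x⟩⟩

theorem Function.Involutive.mem_image_iff {α : Type*} {f : α → α} (hf : Involutive f)
    {A : Set α} {x : α} : x ∈ f '' A ↔ f x ∈ A := by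
  rw [hf.image_eq_preimage_symm, mem_preimage]

theorem Equiv.Perm.involutive_of_mul_self_eq_one {α : Type*} {y : Perm α} (hy : y * y = 1) :
    Involutive y := fun x => by rw [← Perm.mul_apply, hy, Perm.one_apply]

theorem Equiv.swap_image_eq_self {α : Type*} [DecidableEq α] {a b : α} {A : Set α}
    (ha : a ∈ A) (hb : b ∈ A) : ⇑(swap a b) '' A = A :=
  Involutive.image_eq_self_iff_mapsTo (swap_apply_self a b) |>.mpr fun x hx => by
    rw [swap_apply_def]; split_ifs <;> assumption

theorem Equiv.Perm.image_conj_eq_self_iff {α : Type*} {s y : Perm α} {A : Set α}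
    (hs : ⇑s '' A = A) : ⇑(s * y * s) '' A = A ↔ ⇑y '' A = A := by
  rw [Perm.coe_mul, Perm.coe_mul, image_comp, image_comp, hs]
  exact (image_injective.mpr s.injective).eq_iff' hs

section DualMove

variable {u : ℕ} {y : Perm ℕ}

theorem dualMove_succ_of_image_eq (hS : ⇑y '' {u, u + 1, u + 1 + 1} = {u, u + 1, u + 1 + 1}) :
    dualMove (u + 1) y = swap u (u + 1 + 1) * y * swap u (u + 1 + 1) := by
  simp only [dualMove, Nat.add_sub_cancel]
  rw [if_pos hS]

theorem dualMove_succ_of_btwVal_mid (hS : ⇑y '' {u, u + 1, u + 1 + 1} ≠ {u, u + 1, u + 1 + 1})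
    (hB : BtwVal (y u) (y (u + 1)) (y (u + 1 + 1))) : dualMove (u + 1) y = y := by
  simp only [dualMove, Nat.add_sub_cancel]
  rw [if_neg hS, if_pos hB]

theorem dualMove_succ_of_btwVal_right (hS : ⇑y '' {u, u + 1, u + 1 + 1} ≠ {u, u + 1, u + 1 + 1})
    (hB : BtwVal (y u) (y (u + 1 + 1)) (y (u + 1))) :
    dualMove (u + 1) y = swap u (u + 1) * y * swap u (u + 1) := by
  have hB' : ¬ BtwVal (y u) (y (u + 1)) (y (u + 1 + 1)) := by unfold BtwVal at *; omega
  simp only [dualMove, Nat.add_sub_cancel]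
  rw [if_neg hS, if_neg hB', if_pos hB]

theorem dualMove_succ_of_not_btwVal (hS : ⇑y '' {u, u + 1, u + 1 + 1} ≠ {u, u + 1, u + 1 + 1})
    (hB₁ : ¬ BtwVal (y u) (y (u + 1)) (y (u + 1 + 1)))
    (hB₂ : ¬ BtwVal (y u) (y (u + 1 + 1)) (y (u + 1))) :
    dualMove (u + 1) y = swap (u + 1) (u + 1 + 1) * y * swap (u + 1) (u + 1 + 1) := by
  simp only [dualMove, Nat.add_sub_cancel]
  rw [if_neg hS, if_neg hB₁, if_neg hB₂]

theorem dualMove_succ_conj_swap_left (hy : Involutive y)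
    (hS : ⇑y '' {u, u + 1, u + 1 + 1} ≠ {u, u + 1, u + 1 + 1})
    (hB : BtwVal (y u) (y (u + 1 + 1)) (y (u + 1))) :
    dualMove (u + 1) (swap u (u + 1) * y * swap u (u + 1)) =
      swap u (u + 1) * (swap u (u + 1) * y * swap u (u + 1)) * swap u (u + 1) := by
  have hA : ⇑(swap u (u + 1)) '' {u, u + 1, u + 1 + 1} = {u, u + 1, u + 1 + 1} :=
    swap_image_eq_self (by simp) (by simp)
  have hk : u ∉ ⇑y '' {u, u + 1, u + 1 + 1} ∨ u + 1 ∉ ⇑y '' {u, u + 1, u + 1 + 1} := by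
    rw [hy.mem_image_iff, hy.mem_image_iff, ← not_and_or]
    rintro ⟨h₀, h₁⟩
    have hout : ¬ MapsTo y {u, u + 1, u + 1 + 1} {u, u + 1, u + 1 + 1} :=
      mt hy.image_eq_self_iff_mapsTo.mpr hS
    simp only [MapsTo, mem_insert_iff, mem_singleton_iff, forall_eq_or_imp, forall_eq]
      at hout h₀ h₁
    unfold BtwVal at hB
    omega
  apply dualMove_succ_of_btwVal_right
  · exact (Perm.image_conj_eq_self_iff hA).not.mpr hS
  · simp only [Perm.mul_apply, swap_apply_left, swap_apply_right,
      swap_apply_of_ne_of_ne (show u + 1 + 1 ≠ u by omega) (show u + 1 + 1 ≠ u + 1 by omega)]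
    rw [btwVal_swap_iff (mem_image_of_mem _ (by simp)) (mem_image_of_mem _ (by simp))
      (mem_image_of_mem _ (by simp)) hk]
    unfold BtwVal at *
    omega

theorem dualMove_succ_conj_swap_right (hy : Involutive y)
    (hS : ⇑y '' {u, u + 1, u + 1 + 1} ≠ {u, u + 1, u + 1 + 1})
    (hB₁ : ¬ BtwVal (y u) (y (u + 1)) (y (u + 1 + 1)))
    (hB₂ : ¬ BtwVal (y u) (y (u + 1 + 1)) (y (u + 1))) :
    dualMove (u + 1) (swap (u + 1) (u + 1 + 1) * y * swap (u + 1) (u + 1 + 1)) =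
      swap (u + 1) (u + 1 + 1) * (swap (u + 1) (u + 1 + 1) * y * swap (u + 1) (u + 1 + 1)) *
        swap (u + 1) (u + 1 + 1) := by
  have hA : ⇑(swap (u + 1) (u + 1 + 1)) '' {u, u + 1, u + 1 + 1} = {u, u + 1, u + 1 + 1} :=
    swap_image_eq_self (by simp) (by simp)
  have hk : u + 1 ∉ ⇑y '' {u, u + 1, u + 1 + 1} ∨ u + 1 + 1 ∉ ⇑y '' {u, u + 1, u + 1 + 1} := by
    rw [hy.mem_image_iff, hy.mem_image_iff, ← not_and_or]
    rintro ⟨h₁, h₂⟩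
    have hout : ¬ MapsTo y {u, u + 1, u + 1 + 1} {u, u + 1, u + 1 + 1} :=
      mt hy.image_eq_self_iff_mapsTo.mpr hS
    simp only [MapsTo, mem_insert_iff, mem_singleton_iff, forall_eq_or_imp, forall_eq]
      at hout h₁ h₂
    have hne : y (u + 1) ≠ y (u + 1 + 1) := y.injective.ne (by omega)
    unfold BtwVal at hB₁ hB₂
    omega
  apply dualMove_succ_of_not_btwVal
  · exact (Perm.image_conj_eq_self_iff hA).not.mpr hS
  all_goals
    simp only [Perm.mul_apply, swap_apply_left, swap_apply_right,
      swap_apply_of_ne_of_ne (show u ≠ u + 1 by omega) (show u ≠ u + 1 + 1 by omega)]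
    rw [btwVal_swap_iff (mem_image_of_mem _ (by simp)) (mem_image_of_mem _ (by simp))
      (mem_image_of_mem _ (by simp)) hk]
    assumption

theorem exists_dualMove_succ_eq_conj (hy : Involutive y) :
    ∃ s : Perm ℕ, s * s = 1 ∧ dualMove (u + 1) y = s * y * s ∧
      dualMove (u + 1) (s * y * s) = s * (s * y * s) * s := by
  by_cases hS : ⇑y '' {u, u + 1, u + 1 + 1} = {u, u + 1, u + 1 + 1}
  · have hA : ⇑(swap u (u + 1 + 1)) '' {u, u + 1, u + 1 + 1} = {u, u + 1, u + 1 + 1} :=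
      swap_image_eq_self (by simp) (by simp)
    exact ⟨_, swap_mul_self _ _, dualMove_succ_of_image_eq hS,
      dualMove_succ_of_image_eq ((Perm.image_conj_eq_self_iff hA).mpr hS)⟩
  by_cases hB₁ : BtwVal (y u) (y (u + 1)) (y (u + 1 + 1))
  · refine ⟨1, one_mul 1, ?_, ?_⟩ <;> simpa using dualMove_succ_of_btwVal_mid hS hB₁
  by_cases hB₂ : BtwVal (y u) (y (u + 1 + 1)) (y (u + 1))
  · exact ⟨_, swap_mul_self _ _, dualMove_succ_of_btwVal_right hS hB₂,
      dualMove_succ_conj_swap_left hy hS hB₂⟩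
  · exact ⟨_, swap_mul_self _ _, dualMove_succ_of_not_btwVal hS hB₁ hB₂,
      dualMove_succ_conj_swap_right hy hS hB₁ hB₂⟩

end DualMove

theorem dualMove_involution_general (i : ℕ) (hi1 : 1 < i)
    (y : Equiv.Perm ℕ) (hy : y * y = 1) :
    dualMove i y * dualMove i y = 1 ∧ dualMove i (dualMove i y) = y := by
  obtain ⟨u, rfl⟩ : ∃ u, i = u + 1 := ⟨i - 1, by omega⟩
  obtain ⟨s, hs, hz, hzz⟩ :=
    exists_dualMove_succ_eq_conj (u := u) (Perm.involutive_of_mul_self_eq_one hy)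
  rw [hz, hzz]
  exact ⟨conj_mul_self_eq_one hs hy, conj_conj_eq_self hs⟩

/-- For an involution `y ∈ I_n` and `1 < i < n`, the element `z` produced by the
dual-equivalence case rule is again an involution, and the map `y ↦ z` is an
involution on `I_n`. -/
theorem dualMove_involution (n i : ℕ) (hi1 : 1 < i) (hi2 : i < n)
    (y : Equiv.Perm ℕ) (hy : y * y = 1) (hyn : ∀ j, (j = 0 ∨ n < j) → y j = j) :
    dualMove i y * dualMove i y = 1 ∧ dualMove i (dualMove i y) = y :=
  dualMove_involution_general i hi1 y hy
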